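/- Let m ≥ 1, k ∈ {1,…,m−1}, and let A ⊆ {1,…,2^m−1} be a set of 2^k consecutive integers. Let x₁, x₂ ∈ A with φ₂(x₁) < φ₂(x₂) such that no element n ∈ A satisfies φ₂(x₁) < φ₂(n) < φ₂(x₂). Then φ₂(x₂) − φ₂(x₁) ∈ {1/2^k} ∪ {1/2^{k−1} − 3/2^l : l = k+1,…,m} ∪ {3/2^l : l = k+1,…,m}. Moreover, there exist x, x' ∈ A with φ₂(x) ≤ 2^{−k} and 1 − φ₂(x') ≤ 2^{−k}. -/

import Mathlib

/-!
Let `bitRev m n` be the number whose `m` binary digits are those of `n` in reverse order, so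
that `φ₂(n) = bitRev m n / 2^m`. Write `m = k + M` and `n = 2^k q + c` with `c < 2^k`; then
`bitRev m n = bitRev k c · 2^M + bitRev M q`. On a window `A` of `2^k` consecutive integers, `c`
runs once through all residues, so the high part `bitRev k c` runs once through `[0, 2^k)`, while
`q` takes only the values `⌊a/2^k⌋` and `⌊a/2^k⌋ + 1`. Hence neighbours in the `φ₂`-order
have consecutive high parts, and their gap is `2^{-k}`, corrected by
`±(bitRev M (q+1) - bitRev M q)/2^m` when they lie in different blocks. Incrementing `q` flips
its trailing ones and the zero above them, i.e. the leading bits of `bitRev M q`, so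
`bitRev M (q+1) - bitRev M q = 3·2^s - 2^M`. The high parts `0` and `2^k - 1` give the elements
near `0` and `1`.
-/

/-- The `i`-th digit (1-based) of `n` in base `b`, with the convention that the
`0`-th digit is `0`. -/
def nthDigit (b n i : ℕ) : ℕ := if i = 0 then 0 else n / b ^ (i - 1) % b
/-- The radical-inverse (digit-reversal) function in base `b`, using `m` digits:
`φ_b(n) = e₁/b + e₂/b² + ⋯ + e_m/b^m`. -/
noncomputable def radInv (b m n : ℕ) : ℝ :=
  ∑ i ∈ Finset.Icc 1 m, (nthDigit b n i : ℝ) / (b : ℝ) ^ i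

open Finset

def bitRev : ℕ → ℕ → ℕ
  | 0, _ => 0
  | m + 1, n => n % 2 * 2 ^ m + bitRev m (n / 2)

lemma radInv_two_succ (m n : ℕ) :
    radInv 2 (m + 1) n = (n % 2 : ℕ) / 2 + radInv 2 m (n / 2) / 2 := by
  have radInv_eq_sum_range (m n : ℕ) :
      radInv 2 m n = ∑ i ∈ range m, ((n / 2 ^ i % 2 : ℕ) : ℝ) / 2 ^ (i + 1) := by
    rw [radInv, ← Ico_add_one_right_eq_Icc, sum_Ico_eq_sum_range]
    simp [nthDigit, add_comm]
  rw [radInv_eq_sum_range, radInv_eq_sum_range, sum_range_succ', sum_div, add_comm]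
  congr 1
  · norm_num
  · refine sum_congr rfl fun i _ => ?_
    rw [Nat.div_div_eq_div_mul, ← pow_succ', div_div, pow_succ _ (i + 1)]

lemma radInv_two_eq_bitRev_div (m n : ℕ) : radInv 2 m n = bitRev m n / 2 ^ m := by
  induction m generalizing n with
  | zero => simp [radInv, bitRev]
  | succ m ih =>
    rw [radInv_two_succ, ih, bitRev]
    push_cast
    field_simp
    ring

lemma bitRev_lt (m n : ℕ) : bitRev m n < 2 ^ m := by
  induction m generalizing n with
  | zero => simp [bitRev]
  | succ m ih =>
    have := ih (n / 2)
    have := Nat.mod_lt n two_pos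
    rw [bitRev, pow_succ]
    interval_cases n % 2 <;> omega

lemma bitRev_add (k M n : ℕ) :
    bitRev (k + M) n = bitRev k (n % 2 ^ k) * 2 ^ M + bitRev M (n / 2 ^ k) := by
  induction k generalizing n with
  | zero => simp [bitRev]
  | succ k ih =>
    rw [add_right_comm, bitRev, ih, bitRev, Nat.mod_mod_of_dvd n (dvd_pow_self 2 k.succ_ne_zero),
      pow_succ', Nat.mod_mul_right_div_self, Nat.div_div_eq_div_mul, pow_add]
    ring

lemma bitRev_succ_left (m n : ℕ) :
    bitRev (m + 1) n = bitRev m (n % 2 ^ m) * 2 + n / 2 ^ m % 2 := by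
  rw [bitRev_add, bitRev, bitRev]
  simp

lemma bitRev_bitRev {m n : ℕ} (hn : n < 2 ^ m) : bitRev m (bitRev m n) = n := by
  induction m generalizing n with
  | zero => simp_all [bitRev]
  | succ m ih =>
    have hr := bitRev_lt m (n / 2)
    have hlow : (n % 2 * 2 ^ m + bitRev m (n / 2)) % 2 ^ m = bitRev m (n / 2) := by
      rw [Nat.mul_add_mod_self_right, Nat.mod_eq_of_lt hr]
    have hhigh : (n % 2 * 2 ^ m + bitRev m (n / 2)) / 2 ^ m = n % 2 := by
      rw [add_comm, Nat.add_mul_div_right _ _ (by positivity), Nat.div_eq_of_lt hr, zero_add]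
    rw [bitRev_succ_left, bitRev, hlow, hhigh, ih (by rw [pow_succ] at hn; omega)]
    omega

lemma mul_add_lt_mul_add_iff {B j₁ j₂ u₁ u₂ : ℕ} (h₁ : u₁ < B) (h₂ : u₂ < B) :
    j₁ * B + u₁ < j₂ * B + u₂ ↔ j₁ < j₂ ∨ j₁ = j₂ ∧ u₁ < u₂ := by
  constructor
  · intro h
    rcases lt_trichotomy j₁ j₂ with hj | rfl | hj
    · exact .inl hj
    · exact .inr ⟨rfl, by omega⟩
    · nlinarith
  · rintro (hj | ⟨rfl, hu⟩)
    · nlinarith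
    · omega

lemma bitRev_succ_add_two_pow {M q : ℕ} (hq : q + 1 < 2 ^ M) :
    ∃ s < M, bitRev M (q + 1) + 2 ^ M = bitRev M q + 3 * 2 ^ s := by
  induction M generalizing q with
  | zero => simp at hq
  | succ M ih =>
    simp only [bitRev, pow_succ] at hq ⊢
    rcases Nat.mod_two_eq_zero_or_one q with hq2 | hq2
    · refine ⟨M, M.lt_succ_self, ?_⟩
      rw [show (q + 1) / 2 = q / 2 by omega, show (q + 1) % 2 = 1 by omega, hq2]
      ring
    · obtain ⟨s, hs, h⟩ := ih (q := q / 2) (by omega)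
      refine ⟨s, by omega, ?_⟩
      rw [show (q + 1) / 2 = q / 2 + 1 by omega, show (q + 1) % 2 = 0 by omega, hq2]
      omega

lemma div_eq_or_eq_succ_of_mem_Ico {N a n : ℕ} (hN : 0 < N) (hn : n ∈ Ico a (a + N)) :
    n / N = a / N ∨ n / N = a / N + 1 := by
  rw [mem_Ico] at hn
  have hlo : a / N ≤ n / N := Nat.div_le_div_right hn.1
  have hhi : n / N ≤ a / N + 1 := Nat.add_div_right a hN ▸ Nat.div_le_div_right hn.2.le
  omega

lemma exists_mem_Ico_mod_eq (a : ℕ) {N c : ℕ} (hc : c < N) :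
    ∃ n ∈ Ico a (a + N), n % N = c := by
  rw [← mem_range, ← Nat.image_Ico_mod a N, mem_image] at hc
  exact hc

lemma exists_mem_Ico_bitRev_mod_eq (a : ℕ) {k c : ℕ} (hc : c < 2 ^ k) :
    ∃ n ∈ Ico a (a + 2 ^ k), bitRev k (n % 2 ^ k) = c := by
  obtain ⟨n, hn, hnc⟩ := exists_mem_Ico_mod_eq a (bitRev_lt k c)
  exact ⟨n, hn, by rw [hnc, bitRev_bitRev hc]⟩

section Window

variable {k M a : ℕ}

lemma bitRev_mod_injOn : Set.InjOn (fun n ↦ bitRev k (n % 2 ^ k)) (Ico a (a + 2 ^ k)) := by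
  intro x₁ hx₁ x₂ hx₂ h
  apply Nat.mod_injOn_Ico a (2 ^ k) hx₁ hx₂
  simpa only [bitRev_bitRev (Nat.mod_lt _ (Nat.two_pow_pos k))] using congrArg (bitRev k) h

lemma bitRev_mod_eq_succ_of_consecutive {x₁ x₂ : ℕ}
    (hx₁ : x₁ ∈ Ico a (a + 2 ^ k)) (hx₂ : x₂ ∈ Ico a (a + 2 ^ k))
    (hlt : bitRev (k + M) x₁ < bitRev (k + M) x₂)
    (hgap : ∀ n ∈ Ico a (a + 2 ^ k),
      ¬(bitRev (k + M) x₁ < bitRev (k + M) n ∧ bitRev (k + M) n < bitRev (k + M) x₂)) :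
    bitRev k (x₂ % 2 ^ k) = bitRev k (x₁ % 2 ^ k) + 1 := by
  simp only [bitRev_add, mul_add_lt_mul_add_iff, bitRev_lt] at hlt hgap
  rcases hlt with hj | ⟨hj, hR⟩
  · by_contra hne
    obtain ⟨n, hn, hnj⟩ :=
      exists_mem_Ico_bitRev_mod_eq (k := k) a (c := bitRev k (x₁ % 2 ^ k) + 1)
      (by have := bitRev_lt k (x₂ % 2 ^ k); omega)
    exact hgap n hn ⟨.inl (by omega), .inl (by omega)⟩
  · cases bitRev_mod_injOn hx₁ hx₂ hj
    exact absurd hR (lt_irrefl _)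

lemma bitRev_consecutive_gap {x₁ x₂ : ℕ} (hA : a + 2 ^ k ≤ 2 ^ (k + M))
    (hx₁ : x₁ ∈ Ico a (a + 2 ^ k)) (hx₂ : x₂ ∈ Ico a (a + 2 ^ k))
    (hlt : bitRev (k + M) x₁ < bitRev (k + M) x₂)
    (hgap : ∀ n ∈ Ico a (a + 2 ^ k),
      ¬(bitRev (k + M) x₁ < bitRev (k + M) n ∧ bitRev (k + M) n < bitRev (k + M) x₂)) :
    bitRev (k + M) x₂ = bitRev (k + M) x₁ + 2 ^ M ∨
      ∃ s < M, bitRev (k + M) x₂ + 3 * 2 ^ s = bitRev (k + M) x₁ + 2 * 2 ^ M ∨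
        bitRev (k + M) x₂ = bitRev (k + M) x₁ + 3 * 2 ^ s := by
  have hj := bitRev_mod_eq_succ_of_consecutive hx₁ hx₂ hlt hgap
  have hblock {x : ℕ} (hx : x ∈ Ico a (a + 2 ^ k)) : x / 2 ^ k < 2 ^ M := by
    apply Nat.div_lt_of_lt_mul
    rw [← pow_add]
    exact (mem_Ico.1 hx).2.trans_le hA
  rw [bitRev_add, bitRev_add, hj, add_one_mul]
  rcases div_eq_or_eq_succ_of_mem_Ico (Nat.two_pow_pos k) hx₁ with h₁ | h₁ <;>
  rcases div_eq_or_eq_succ_of_mem_Ico (Nat.two_pow_pos k) hx₂ with h₂ | h₂ <;>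
  rw [h₁, h₂]
  · exact .inl (by ring)
  · obtain ⟨s, hs, hcarry⟩ := bitRev_succ_add_two_pow (h₂ ▸ hblock hx₂)
    exact .inr ⟨s, hs, .inr (by omega)⟩
  · obtain ⟨s, hs, hcarry⟩ := bitRev_succ_add_two_pow (h₁ ▸ hblock hx₁)
    exact .inr ⟨s, hs, .inl (by omega)⟩
  · exact .inl (by ring)

end Window

lemma exists_mem_Ico_bitRev_lt (k M a : ℕ) :
    ∃ n ∈ Ico a (a + 2 ^ k), bitRev (k + M) n < 2 ^ M := by
  obtain ⟨n, hn, hn0⟩ := exists_mem_Ico_bitRev_mod_eq a (Nat.two_pow_pos k)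
  refine ⟨n, hn, ?_⟩
  rw [bitRev_add, hn0, zero_mul, zero_add]
  exact bitRev_lt M _

lemma exists_mem_Ico_two_pow_le_bitRev_add (k M a : ℕ) :
    ∃ n ∈ Ico a (a + 2 ^ k), 2 ^ (k + M) ≤ bitRev (k + M) n + 2 ^ M := by
  obtain ⟨n, hn, hn1⟩ := exists_mem_Ico_bitRev_mod_eq a (Nat.sub_one_lt (Nat.two_pow_pos k).ne')
  refine ⟨n, hn, ?_⟩
  rw [bitRev_add, hn1, pow_add, add_right_comm, ← add_one_mul,
    Nat.sub_add_cancel Nat.one_le_two_pow]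
  exact Nat.le_add_right _ _

lemma radInv_two_lt_iff (m x y : ℕ) :
    radInv 2 m x < radInv 2 m y ↔ bitRev m x < bitRev m y := by
  rw [radInv_two_eq_bitRev_div, radInv_two_eq_bitRev_div,
    div_lt_div_iff_of_pos_right (by positivity), Nat.cast_lt]

lemma radInv_two_gap_of_bitRev_gap {k M x₁ x₂ : ℕ} (hk : 1 ≤ k)
    (h : bitRev (k + M) x₂ = bitRev (k + M) x₁ + 2 ^ M ∨
      ∃ s < M, bitRev (k + M) x₂ + 3 * 2 ^ s = bitRev (k + M) x₁ + 2 * 2 ^ M ∨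
        bitRev (k + M) x₂ = bitRev (k + M) x₁ + 3 * 2 ^ s) :
    radInv 2 (k + M) x₂ - radInv 2 (k + M) x₁ = 1 / (2 : ℝ) ^ k ∨
      ∃ l : ℕ, k + 1 ≤ l ∧ l ≤ k + M ∧
        (radInv 2 (k + M) x₂ - radInv 2 (k + M) x₁ =
            1 / (2 : ℝ) ^ (k - 1) - 3 / (2 : ℝ) ^ l ∨
          radInv 2 (k + M) x₂ - radInv 2 (k + M) x₁ = 3 / (2 : ℝ) ^ l) := by
  simp only [radInv_two_eq_bitRev_div, ← sub_div]
  obtain ⟨k, rfl⟩ := Nat.exists_eq_add_of_le' hk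
  rcases h with h | ⟨s, hs, h | h⟩
  · left
    rw [sub_eq_of_eq_add' (c := (2 : ℝ) ^ M) (by exact_mod_cast h), pow_add]
    field_simp
  all_goals
    obtain ⟨t, rfl⟩ := Nat.exists_eq_add_of_lt hs
    refine .inr ⟨k + 1 + t + 1, by omega, by omega, ?_⟩
    simp only [add_tsub_cancel_right, pow_add]
  · left
    have h := congrArg (Nat.cast : ℕ → ℝ) h
    push_cast [pow_add] at h
    field_simp
    linear_combination h
  · right
    rw [sub_eq_of_eq_add' (c := 3 * (2 : ℝ) ^ s) (by exact_mod_cast h)]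
    field_simp

theorem radInv_gap_structure (m k a : ℕ) (hk1 : 1 ≤ k) (ha2 : a + 2 ^ k ≤ 2 ^ m) :
    (∀ x₁ ∈ Finset.Ico a (a + 2 ^ k), ∀ x₂ ∈ Finset.Ico a (a + 2 ^ k),
      radInv 2 m x₁ < radInv 2 m x₂ →
      (∀ n ∈ Finset.Ico a (a + 2 ^ k), ¬(radInv 2 m x₁ < radInv 2 m n ∧ radInv 2 m n < radInv 2 m x₂)) →
      (radInv 2 m x₂ - radInv 2 m x₁ = 1 / (2 : ℝ) ^ k ∨
        ∃ l : ℕ, k + 1 ≤ l ∧ l ≤ m ∧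
          (radInv 2 m x₂ - radInv 2 m x₁ = 1 / (2 : ℝ) ^ (k - 1) - 3 / (2 : ℝ) ^ l ∨
           radInv 2 m x₂ - radInv 2 m x₁ = 3 / (2 : ℝ) ^ l))) ∧
    (∃ x ∈ Finset.Ico a (a + 2 ^ k), radInv 2 m x ≤ 1 / (2 : ℝ) ^ k) ∧
    (∃ x' ∈ Finset.Ico a (a + 2 ^ k), 1 - radInv 2 m x' ≤ 1 / (2 : ℝ) ^ k) := by
  have hkm : k ≤ m := (Nat.pow_le_pow_iff_right one_lt_two).1 (le_of_add_le_right ha2)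
  obtain ⟨M, rfl⟩ := Nat.exists_eq_add_of_le hkm
  refine ⟨fun x₁ hx₁ x₂ hx₂ hlt hgap ↦ ?_, ?_, ?_⟩
  · simp only [radInv_two_lt_iff] at hlt hgap
    exact radInv_two_gap_of_bitRev_gap hk1 (bitRev_consecutive_gap ha2 hx₁ hx₂ hlt hgap)
  · obtain ⟨x, hx, hlt⟩ := exists_mem_Ico_bitRev_lt k M a
    refine ⟨x, hx, ?_⟩
    rw [radInv_two_eq_bitRev_div, pow_add, ← div_div, div_right_comm,
      div_le_div_iff_of_pos_right (by positivity), div_le_one (by positivity)]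
    exact_mod_cast hlt.le
  · obtain ⟨x, hx, hle⟩ := exists_mem_Ico_two_pow_le_bitRev_add k M a
    refine ⟨x, hx, ?_⟩
    rw [radInv_two_eq_bitRev_div, one_sub_div (by positivity), pow_add, ← div_div, div_right_comm,
      div_le_div_iff_of_pos_right (by positivity), div_le_one (by positivity), sub_le_iff_le_add']
    exact_mod_cast pow_add 2 k M ▸ hle
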